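/- Let p be a prime, L a finite field of characteristic p, and β a field automorphism of L of order p. Then the semidirect product L ⋊ ⟨β⟩ (with β acting on the additive group of L) does not have exponent p; that is, it contains an element of order p². -/

import Mathlib

/-! The element `g = (x, β)` satisfies `g ^ p = (x + β x + ⋯ + β ^ (p - 1) x, 1)`. By Dedekind's
independence of the characters `1, β, …, β ^ (p - 1)` this trace-like sum is nonzero for some `x`,
and then `g ^ p` is a nontrivial element of the elementary abelian `p`-group `L`, so `g` has order
`p ^ 2`. -/

open Finset

theorem RingEquiv.exists_sum_range_orderOf_pow_apply_ne_zero {L : Type*} [Field L] (σ : L ≃+* L)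
    (hσ : IsOfFinOrder σ) : ∃ x : L, ∑ i ∈ range (orderOf σ), (σ ^ i) x ≠ 0 := by
  by_contra! h
  have hinj : Function.Injective fun i : Fin (orderOf σ) => (σ ^ (i : ℕ) : L ≃+* L).toMonoidHom :=
    fun i j hij => Fin.ext <| pow_injOn_Iio_orderOf i.2 j.2 <|
      RingEquiv.ext fun x => DFunLike.congr_fun hij x
  have hsum : ∑ i : Fin (orderOf σ), (1 : L) • ⇑(σ ^ (i : ℕ) : L ≃+* L).toMonoidHom = 0 := by
    funext x
    simpa [Fin.sum_univ_eq_sum_range (fun i => (⇑σ)^[i] x)] using h x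
  exact one_ne_zero <| Fintype.linearIndependent_iff.mp
    ((linearIndependent_monoidHom L L).comp _ hinj) (fun _ => 1) hsum ⟨0, hσ.orderOf_pos⟩

namespace SemidirectProduct

variable {N G : Type*} [CommGroup N] [Group G] {φ : G →* MulAut N}

theorem right_pow (g : N ⋊[φ] G) (k : ℕ) : (g ^ k).right = g.right ^ k :=
  map_pow rightHom g k

theorem left_pow (g : N ⋊[φ] G) (k : ℕ) :
    (g ^ k).left = ∏ i ∈ range k, φ (g.right ^ i) g.left := by
  induction k with
  | zero => rfl
  | succ k ih => rw [pow_succ, mul_left, ih, right_pow, prod_range_succ]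

end SemidirectProduct

theorem stmt_8_general (p : ℕ) (hp : p.Prime) (L : Type*) [Field L] [CharP L p]
    (β : L ≃+* L) (hβ : orderOf β = p)
    (φ : Multiplicative (ZMod p) →* MulAut (Multiplicative L))
    (hφ : ∀ (i : ZMod p) (x : L),
      φ (Multiplicative.ofAdd i) (Multiplicative.ofAdd x)
        = Multiplicative.ofAdd ((β ^ i.val) x)) :
    ∃ g : Multiplicative L ⋊[φ] Multiplicative (ZMod p), orderOf g = p ^ 2 := by
  have : Fact p.Prime := ⟨hp⟩
  obtain ⟨x, hx⟩ := β.exists_sum_range_orderOf_pow_apply_ne_zero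
    (orderOf_pos_iff.mp (hβ ▸ hp.pos))
  rw [hβ] at hx
  let g : Multiplicative L ⋊[φ] Multiplicative (ZMod p) :=
    ⟨Multiplicative.ofAdd x, Multiplicative.ofAdd 1⟩
  have hφg (i : ℕ) : φ (g.right ^ i) g.left = Multiplicative.ofAdd ((β ^ i) x) := by
    rw [← ofAdd_nsmul, nsmul_one, hφ, ZMod.val_natCast, ← hβ, pow_mod_orderOf]
  have hgp : g ^ p = SemidirectProduct.inl (Multiplicative.ofAdd (∑ i ∈ range p, (β ^ i) x)) := by
    ext
    · rw [SemidirectProduct.left_pow, SemidirectProduct.left_inl, ofAdd_sum]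
      exact congrArg _ (prod_congr rfl fun i _ => hφg i)
    · rw [SemidirectProduct.right_pow, SemidirectProduct.right_inl, ← ofAdd_nsmul, nsmul_one,
        ZMod.natCast_self, ofAdd_zero]
  refine ⟨g, orderOf_eq_prime_pow ?_ ?_⟩
  · rw [pow_one, hgp, ← map_one SemidirectProduct.inl, SemidirectProduct.inl_inj]
    exact fun h => hx (ofAdd_eq_one.mp h)
  · rw [sq, pow_mul, hgp, ← map_pow, ← ofAdd_nsmul, nsmul_eq_mul, CharP.cast_eq_zero, zero_mul,
      ofAdd_zero, map_one]

/-- The semidirect product `L ⋊ ⟨β⟩` of the additive group of a finite field `L` of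
characteristic `p` with a field automorphism `β` of order `p` contains an element
of order `p ^ 2`; in particular it does not have exponent `p`. -/
theorem stmt_8 (p : ℕ) (hp : p.Prime) (L : Type*) [Field L] [Fintype L] [CharP L p]
    (β : L ≃+* L) (hβ : orderOf β = p)
    (φ : Multiplicative (ZMod p) →* MulAut (Multiplicative L))
    (hφ : ∀ (i : ZMod p) (x : L),
      φ (Multiplicative.ofAdd i) (Multiplicative.ofAdd x)
        = Multiplicative.ofAdd ((β ^ i.val) x)) :
    ∃ g : Multiplicative L ⋊[φ] Multiplicative (ZMod p), orderOf g = p ^ 2 :=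
  stmt_8_general p hp L β hβ φ hφ
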